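/- arXiv:2512.22736 — 4 statements merged into one kernel-verified Lean document; each statement's English description precedes it below -/
import Mathlib

section
/- Let 0 < r < R, α ∈ (0,1], β ∈ (0,1], R̃ = αR, r̃ = αr, Δ = R̃ − r̃, E(x) = xΔ + r̃, V(x) = x(1−x)Δ², and for N = 2 define s₁¹(p¹,p²) = E(p¹) + β·[E(p¹)·(E(p¹) − E(p²)) + (3/2)·V(p¹)] and symmetrically s₁²(p¹,p²) = E(p²) + β·[E(p²)·(E(p²) − E(p¹)) + (3/2)·V(p²)]. Then for all p¹ > p² in [0,1]: s₁¹(p¹,p²) + s₁²(p¹,p²) − (s₁¹(p¹,p¹) + s₁²(p²,p²)) = β·(E(p¹) − E(p²))·(E(p¹) − E(p²)) > 0, i.e., the aggregate first-period effort of a disagreeing pair strictly exceeds the sum of efforts each member would exert in a like-minded team of her own type. -/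
theorem stmt_1
    (r R α β : ℝ)
    (hr : 0 < r) (hrR : r < R)
    (hα : α ∈ Set.Ioc (0:ℝ) 1) (hβ : β ∈ Set.Ioc (0:ℝ) 1)
    (p₁ p₂ : ℝ) (hp₁ : p₁ ∈ Set.Icc (0:ℝ) 1) (hp₂ : p₂ ∈ Set.Icc (0:ℝ) 1)
    (hgt : p₁ > p₂) :
    let R' := α * R
    let r' := α * r
    let Δ := R' - r'
    let E : ℝ → ℝ := fun x => x * Δ + r'
    let V : ℝ → ℝ := fun x => x * (1 - x) * Δ ^ 2
    let s₁a : ℝ → ℝ → ℝ := fun a b => E a + β * (E a * (E a - E b) + (3 / 2) * V a)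
    let s₁b : ℝ → ℝ → ℝ := fun a b => E b + β * (E b * (E b - E a) + (3 / 2) * V b)
    s₁a p₁ p₂ + s₁b p₁ p₂ - (s₁a p₁ p₁ + s₁b p₂ p₂)
      = β * (E p₁ - E p₂) * (E p₁ - E p₂) ∧
    β * (E p₁ - E p₂) * (E p₁ - E p₂) > 0 := by
  intro R' r' Δ E V s₁a s₁b
  have hΔ : 0 < Δ := by
    have := hα.1
    simp only [Δ, R', r']
    nlinarith
  have hE : E p₁ - E p₂ > 0 := by
    simp only [E]
    nlinarith
  constructor
  · simp only [s₁a, s₁b, E, V]; ring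
  · have := hβ.1
    positivity
end

section
/- Let N ≥ 2, 0 < r < R, α ∈ (0,1], β ∈ (0,1], R̃ = αR, r̃ = αr, Δ = R̃ − r̃, E(x) = xΔ + r̃, V(x) = x(1−x)Δ². Define ē₁(p) = Σ_{i=1}^N [ E(pⁱ) + β·( E(pⁱ)·Σ_{j=1}^N (E(pⁱ) − E(pʲ)) + ((2N−1)/2)·V(pⁱ) ) ]. Then for every p ∈ [0,1]^N, with p̄ = O(p) and D(p) = (2/(N(N−1)))·Σ_{i<j}(pⁱ−pʲ)², it holds that ē₁(p) = N·E(p̄) + (β·N·Δ²/2)·[ (2N−1)·p̄(1−p̄) + ((N−1)/(2N))·D(p) ]. -/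
open Finset

lemma pair_sum_aux (N : ℕ) (f : Fin N → Fin N → ℝ)
    (hsymm : ∀ i j, f i j = f j i) (hdiag : ∀ i, f i i = 0) :
    2 * ∑ i, ∑ j ∈ Finset.univ.filter (fun j => i < j), f i j = ∑ i, ∑ j, f i j := by
  have hconv : ∀ (P : Fin N → Fin N → Prop) [∀ i j, Decidable (P i j)],
      (∑ i, ∑ j ∈ Finset.univ.filter (fun j => P i j), f i j)
      = ∑ x ∈ (Finset.univ ×ˢ Finset.univ).filter (fun x : Fin N × Fin N => P x.1 x.2),
          f x.1 x.2 := by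
    intro P _
    rw [Finset.sum_filter, Finset.sum_product]
    simp [Finset.sum_filter]
  have hswap : (∑ x ∈ (Finset.univ ×ˢ Finset.univ).filter
        (fun x : Fin N × Fin N => x.2 < x.1), f x.1 x.2)
      = ∑ x ∈ (Finset.univ ×ˢ Finset.univ).filter
        (fun x : Fin N × Fin N => x.1 < x.2), f x.1 x.2 := by
    apply Finset.sum_nbij' (fun x => Prod.swap x) (fun x => Prod.swap x)
    · intro a ha; simp at ha ⊢; exact ha
    · intro a ha; simp at ha ⊢; exact ha
    · intro a _; simp
    · intro a _; simp
    · intro a _; exact hsymm a.1 a.2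
  have hpt : ∀ x : Fin N × Fin N, f x.1 x.2
      = (if x.1 < x.2 then f x.1 x.2 else 0) + (if x.2 < x.1 then f x.1 x.2 else 0) := by
    intro x
    rcases lt_trichotomy x.1 x.2 with h | h | h
    · simp [h, not_lt_of_gt h]
    · simp [h, hdiag]
    · simp [h, not_lt_of_gt h]
  have hfull : (∑ x ∈ (Finset.univ ×ˢ Finset.univ : Finset (Fin N × Fin N)), f x.1 x.2)
      = (∑ x ∈ (Finset.univ ×ˢ Finset.univ).filter (fun x : Fin N × Fin N => x.1 < x.2),
          f x.1 x.2)
        + ∑ x ∈ (Finset.univ ×ˢ Finset.univ).filter (fun x : Fin N × Fin N => x.2 < x.1),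
          f x.1 x.2 := by
    rw [Finset.sum_filter, Finset.sum_filter, ← Finset.sum_add_distrib]
    exact Finset.sum_congr rfl fun x _ => hpt x
  rw [show (∑ i, ∑ j, f i j)
      = ∑ x ∈ (Finset.univ ×ˢ Finset.univ : Finset (Fin N × Fin N)), f x.1 x.2
    from (Finset.sum_product' _ _ _).symm, hfull, hswap, hconv (fun i j => i < j)]
  ring

theorem stmt_4
    (N : ℕ) (hN : 2 ≤ N)
    (r R α β : ℝ)
    (hr : 0 < r) (hrR : r < R)
    (hα : α ∈ Set.Ioc (0:ℝ) 1) (hβ : β ∈ Set.Ioc (0:ℝ) 1)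
    (p : Fin N → ℝ) (hp : ∀ j, p j ∈ Set.Icc (0:ℝ) 1) :
    let R' := α * R
    let r' := α * r
    let Δ := R' - r'
    let E : ℝ → ℝ := fun x => x * Δ + r'
    let V : ℝ → ℝ := fun x => x * (1 - x) * Δ ^ 2
    let ebar := ∑ i, (E (p i) + β * (E (p i) * (∑ j, (E (p i) - E (p j)))
        + ((2 * (N : ℝ) - 1) / 2) * V (p i)))
    let pbar := (∑ i, p i) / N
    let D := (2 / ((N : ℝ) * ((N : ℝ) - 1))) *
      ∑ i, ∑ j ∈ Finset.univ.filter (fun j => i < j), (p i - p j) ^ 2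
    ebar = (N : ℝ) * E pbar + (β * (N : ℝ) * Δ ^ 2 / 2) *
      ((2 * (N : ℝ) - 1) * pbar * (1 - pbar) + (((N : ℝ) - 1) / (2 * (N : ℝ))) * D) := by
  intro R' r' Δ E V ebar pbar D
  have hN0 : (0:ℝ) < (N:ℝ) := by positivity
  have hNne : (N:ℝ) ≠ 0 := ne_of_gt hN0
  have hN1ne : (N:ℝ) - 1 ≠ 0 := by
    have : (2:ℝ) ≤ (N:ℝ) := by exact_mod_cast hN
    linarith
  -- generic quadratic sum lemma
  have hgen : ∀ a b c : ℝ, (∑ i, (a + b * p i + c * (p i) ^ 2))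
      = (N:ℝ) * a + b * (∑ i, p i) + c * (∑ i, (p i) ^ 2) := by
    intro a b c
    rw [Finset.sum_add_distrib, Finset.sum_add_distrib, Finset.sum_const,
      ← Finset.mul_sum, ← Finset.mul_sum, Finset.card_univ, Fintype.card_fin,
      nsmul_eq_mul]
  -- pair sum identity
  have hU : (∑ i, ∑ j ∈ Finset.univ.filter (fun j => i < j), (p i - p j) ^ 2)
      = ((N:ℝ) * (∑ i, (p i)^2) - (∑ i, p i) ^ 2) := by
    have h2 := pair_sum_aux N (fun i j => (p i - p j) ^ 2)
      (fun i j => by ring) (fun i => by ring)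
    have hin : ∀ i : Fin N, (∑ j, (p i - p j) ^ 2)
        = ((∑ j, (p j)^2) + (-2 * (∑ j, p j)) * p i + (N:ℝ) * (p i) ^ 2) := by
      intro i
      have e : ∀ j, (p i - p j) ^ 2 = (p i)^2 + (-2 * p i) * p j + 1 * (p j)^2 :=
        fun j => by ring
      rw [Finset.sum_congr rfl fun j _ => e j, hgen ((p i)^2) (-2 * p i) 1]
      ring
    have hfull : (∑ i, ∑ j, (p i - p j) ^ 2)
        = 2 * ((N:ℝ) * (∑ i, (p i)^2) - (∑ i, p i) ^ 2) := by
      rw [Finset.sum_congr rfl fun i _ => hin i,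
        hgen ((∑ j, (p j)^2)) (-2 * (∑ j, p j)) (N:ℝ)]
      ring
    linarith [h2.trans hfull]
  -- per-summand expansion
  have hinner : ∀ i : Fin N, (∑ j, (E (p i) - E (p j)))
      = ((N:ℝ) * p i - (∑ j, p j)) * Δ := by
    intro i
    have e : ∀ j, E (p i) - E (p j) = (p i * Δ) + (-Δ) * p j + 0 * (p j)^2 :=
      fun j => by simp only [E]; ring
    rw [Finset.sum_congr rfl fun j _ => e j, hgen (p i * Δ) (-Δ) 0]
    ring
  have hsummand : ∀ i : Fin N,
      (E (p i) + β * (E (p i) * (∑ j, (E (p i) - E (p j)))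
        + ((2 * (N : ℝ) - 1) / 2) * V (p i)))
      = (r' - β * r' * Δ * (∑ j, p j))
        + (Δ + β * (r' * Δ * (N:ℝ) + ((2 * (N:ℝ) - 1)/2) * Δ^2 - Δ^2 * (∑ j, p j))) * p i
        + (β * (Δ^2 * (N:ℝ) - ((2 * (N:ℝ) - 1)/2) * Δ^2)) * (p i)^2 := by
    intro i
    rw [hinner i]
    simp only [E, V]
    ring
  have hebar : ebar = (N:ℝ) * (r' - β * r' * Δ * (∑ j, p j))
      + (Δ + β * (r' * Δ * (N:ℝ) + ((2 * (N:ℝ) - 1)/2) * Δ^2 - Δ^2 * (∑ j, p j)))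
          * (∑ i, p i)
      + (β * (Δ^2 * (N:ℝ) - ((2 * (N:ℝ) - 1)/2) * Δ^2)) * (∑ i, (p i)^2) := by
    show (∑ i, (E (p i) + β * (E (p i) * (∑ j, (E (p i) - E (p j)))
        + ((2 * (N : ℝ) - 1) / 2) * V (p i)))) = _
    rw [Finset.sum_congr rfl fun i _ => hsummand i, hgen]
  have hD : D = (2 / ((N : ℝ) * ((N : ℝ) - 1))) *
      ((N:ℝ) * (∑ i, (p i)^2) - (∑ i, p i) ^ 2) := by
    show (2 / ((N : ℝ) * ((N : ℝ) - 1))) *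
      (∑ i, ∑ j ∈ Finset.univ.filter (fun j => i < j), (p i - p j) ^ 2) = _
    rw [hU]
  rw [hebar, hD]
  simp only [E, pbar]
  field_simp
  ring
end

section
/- Let 0 ≤ r̃ ≤ R̃ ≤ 1/4, 0 ≤ q ≤ p ≤ 1, 0 ≤ β ≤ 1, and set Δ = R̃ − r̃. Define A¹ = pΔ + r̃ + (3/2)β[pR̃² + (1−p)(qΔ+r̃)² − (pΔ+r̃)²], A² = qΔ + r̃ + (3/2)β[qR̃² + (1−q)(pΔ+r̃)² − (pΔ+r̃)²], and B = (3/2)β[(1−q)Δ²p(1−p) − pR̃² − (1−p)(qΔ+r̃)² + (pΔ+r̃)²]. Then |B| < 1, (A¹ + B·A²)/(1 − B²) ≤ R̃, and (A² + B·A¹)/(1 − B²) ≤ R̃. -/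
set_option maxHeartbeats 2000000 in
theorem aux_stmt12 (R' r' p q β : ℝ)
    (hr0 : 0 ≤ r') (hrR : r' ≤ R') (hR : R' ≤ 1 / 4)
    (hq0 : 0 ≤ q) (hqp : q ≤ p) (hp1 : p ≤ 1)
    (hβ0 : 0 ≤ β) (hβ1 : β ≤ 1) :
    |((3 / 2) * β * ((1 - q) * (R' - r') ^ 2 * p * (1 - p) - p * R' ^ 2 - (1 - p) * (q * (R' - r') + r') ^ 2 + (p * (R' - r') + r') ^ 2))| < 1 ∧ ((p * (R' - r') + r' + (3 / 2) * β * (p * R' ^ 2 + (1 - p) * (q * (R' - r') + r') ^ 2 - (p * (R' - r') + r') ^ 2)) + ((3 / 2) * β * ((1 - q) * (R' - r') ^ 2 * p * (1 - p) - p * R' ^ 2 - (1 - p) * (q * (R' - r') + r') ^ 2 + (p * (R' - r') + r') ^ 2)) * (q * (R' - r') + r' + (3 / 2) * β * (q * R' ^ 2 + (1 - q) * (p * (R' - r') + r') ^ 2 - (p * (R' - r') + r') ^ 2))) / (1 - ((3 / 2) * β * ((1 - q) * (R' - r') ^ 2 * p * (1 - p) - p * R' ^ 2 - (1 - p) * (q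 * (R' - r') + r') ^ 2 + (p * (R' - r') + r') ^ 2)) ^ 2) ≤ R'
      ∧ ((q * (R' - r') + r' + (3 / 2) * β * (q * R' ^ 2 + (1 - q) * (p * (R' - r') + r') ^ 2 - (p * (R' - r') + r') ^ 2)) + ((3 / 2) * β * ((1 - q) * (R' - r') ^ 2 * p * (1 - p) - p * R' ^ 2 - (1 - p) * (q * (R' - r') + r') ^ 2 + (p * (R' - r') + r') ^ 2)) * (p * (R' - r') + r' + (3 / 2) * β * (p * R' ^ 2 + (1 - p) * (q * (R' - r') + r') ^ 2 - (p * (R' - r') + r') ^ 2))) / (1 - ((3 / 2) * β * ((1 - q) * (R' - r') ^ 2 * p * (1 - p) - p * R' ^ 2 - (1 - p) * (q * (R' - r') + r') ^ 2 + (p * (R' - r') + r') ^ 2)) ^ 2) ≤ R' := by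
  have hD : (0:ℝ) ≤ (R' - r') := by linarith only [hrR]
  have hR0 : (0:ℝ) ≤ R' := le_trans hr0 hrR
  have hp0 : (0:ℝ) ≤ p := le_trans hq0 hqp
  have hq1 : q ≤ 1 := le_trans hqp hp1
  have hy0 : (0:ℝ) ≤ (p * (R' - r') + r') := by linarith only [mul_nonneg hp0 hD, hr0]
  have hx0 : (0:ℝ) ≤ (q * (R' - r') + r') := by linarith only [mul_nonneg hq0 hD, hr0]
  have hxy : (q * (R' - r') + r') ≤ (p * (R' - r') + r') := by linarith only [mul_nonneg (sub_nonneg.2 hqp) hD]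
  have hyR : (p * (R' - r') + r') ≤ R' := by linarith only [mul_nonneg (sub_nonneg.2 hp1) hD]
  have hS0 : (0:ℝ) ≤ (R' + (p * (R' - r') + r')) := by linarith only [hR0, hy0]
  have hS2 : (R' + (p * (R' - r') + r')) ≤ 1/2 := by linarith only [hR, hyR]
  have hw0 : (0:ℝ) ≤ β * (R' + (p * (R' - r') + r')) := mul_nonneg hβ0 hS0
  have hw : β * (R' + (p * (R' - r') + r')) ≤ 1/2 := by linarith only [mul_nonneg (sub_nonneg.2 hβ1) hS0, hS2]
  have hβp0 : (0:ℝ) ≤ β * (1 - p) := mul_nonneg hβ0 (by linarith only [hp1])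
  have hβp1 : β * (1 - p) ≤ 1 := by linarith only [mul_nonneg hβ0 hp0, hβ1]
  have hcin : (0:ℝ) ≤ (R' + (p * (R' - r') + r')) - (1 - q) * (R' - r') := by linarith only [mul_nonneg hq0 hD, hr0, hy0]
  have hc0 : (0:ℝ) ≤ (R' - r') * ((R' + (p * (R' - r') + r')) - (1 - q) * (R' - r')) := mul_nonneg hD hcin
  have t1 : (0:ℝ) ≤ (1 - p) * ((R' - r') * (1 - (3/2) * (β * (p * (R' + (p * (R' - r') + r')))))) := by
    apply mul_nonneg (by linarith only [hp1])
    apply mul_nonneg hD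
    linarith only [mul_nonneg (sub_nonneg.2 hp1) hw0, hw]
  have hT0 : (0:ℝ) ≤ (3/2) * (β * ((1 - p) * (((p * (R' - r') + r') - (q * (R' - r') + r')) * ((p * (R' - r') + r') + (q * (R' - r') + r'))))) := by
    have h := mul_nonneg hβp0 (mul_nonneg (sub_nonneg.2 hxy) (by linarith only [hy0, hx0] : (0:ℝ) ≤ (p * (R' - r') + r') + (q * (R' - r') + r')))
    linarith only [h]
  have u1 : (0:ℝ) ≤ (1 - p) * ((R' - r') * (1 - (3/2) * (β * (q * (R' + (p * (R' - r') + r')))))) := by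
    apply mul_nonneg (by linarith only [hp1])
    apply mul_nonneg hD
    linarith only [mul_nonneg (sub_nonneg.2 hq1) hw0, hw]
  have u2 : (0:ℝ) ≤ (p - q) * (R' - r') := mul_nonneg (by linarith only [hqp]) hD
  have v1 : (0:ℝ) ≤ (p * (R' - r') + r') * (1 - (3/2) * (β * ((1 - p) * (p * (R' - r') + r')))) := by
    apply mul_nonneg hy0
    linarith only [mul_nonneg hβp0 (by linarith only [hyR, hR] : (0:ℝ) ≤ 1/4 - (p * (R' - r') + r')), hβp1]
  have v2 : (0:ℝ) ≤ (3/2) * (β * (p * ((R' - (p * (R' - r') + r')) * (R' + (p * (R' - r') + r'))))) := by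
    have h := mul_nonneg (mul_nonneg hβ0 hp0) (mul_nonneg (sub_nonneg.2 hyR) hS0)
    linarith only [h]
  have v3 : (0:ℝ) ≤ (3/2) * (β * ((1 - p) * (q * (R' - r') + r') ^ 2)) := by
    have h := mul_nonneg hβp0 (sq_nonneg (q * (R' - r') + r'))
    linarith only [h]
  have w1 : (0:ℝ) ≤ (3/2) * (β * (q * ((R' - (p * (R' - r') + r')) * (R' + (p * (R' - r') + r'))))) := by
    have h := mul_nonneg (mul_nonneg hβ0 hq0) (mul_nonneg (sub_nonneg.2 hyR) hS0)
    linarith only [h]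
  have hC0 : (0:ℝ) ≤ (3/2) * (β * ((1 - p) * (p * ((R' - r') * ((R' + (p * (R' - r') + r')) - (1 - q) * (R' - r')))))) := by
    have h := mul_nonneg (mul_nonneg hβp0 hp0) hc0
    linarith only [h]
  have hd0 : (0:ℝ) ≤ ((p * (R' - r') + r') - (q * (R' - r') + r')) * ((p * (R' - r') + r') + (q * (R' - r') + r')) :=
    mul_nonneg (sub_nonneg.2 hxy) (by linarith only [hy0, hx0])
  have hd16 : ((p * (R' - r') + r') - (q * (R' - r') + r')) * ((p * (R' - r') + r') + (q * (R' - r') + r')) ≤ 1/16 := by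
    linarith only [sq_nonneg (q * (R' - r') + r'),
      mul_nonneg (by linarith only [hyR, hR] : (0:ℝ) ≤ 1/4 - (p * (R' - r') + r')) (by linarith only [hy0] : (0:ℝ) ≤ 1/4 + (p * (R' - r') + r'))]
  have hTle : (3/2) * (β * ((1 - p) * (((p * (R' - r') + r') - (q * (R' - r') + r')) * ((p * (R' - r') + r') + (q * (R' - r') + r'))))) ≤ 3/16 := by
    linarith only [mul_nonneg (sub_nonneg.2 hβp1) hd0,
      mul_nonneg hβp0 (by linarith only [hd16] : (0:ℝ) ≤ 1/16 - ((p * (R' - r') + r') - (q * (R' - r') + r')) * ((p * (R' - r') + r') + (q * (R' - r') + r'))), hβp1, hβp0]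
  have ha2 : β * ((1 - p) * p) ≤ 1 := by
    linarith only [mul_nonneg (sub_nonneg.2 hβ1) (mul_nonneg (by linarith only [hp1] : (0:ℝ) ≤ 1 - p) hp0),
      sq_nonneg (1 - 2*p)]
  have ha20 : (0:ℝ) ≤ β * ((1 - p) * p) := mul_nonneg hβ0 (mul_nonneg (by linarith only [hp1]) hp0)
  have he2 : (R' - r') * ((R' + (p * (R' - r') + r')) - (1 - q) * (R' - r')) ≤ 1/8 := by
    linarith only [mul_nonneg (by linarith only [hrR, hR, hr0] : (0:ℝ) ≤ 1/4 - (R' - r')) hcin,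
      mul_nonneg hD (by linarith only [hS2, mul_nonneg (by linarith only [hq1] : (0:ℝ) ≤ 1 - q) hD] :
        (0:ℝ) ≤ 1/2 - ((R' + (p * (R' - r') + r')) - (1 - q) * (R' - r'))), mul_nonneg (by linarith only [hq1] : (0:ℝ) ≤ 1 - q) hD, hS2]
  have hCle : (3/2) * (β * ((1 - p) * (p * ((R' - r') * ((R' + (p * (R' - r') + r')) - (1 - q) * (R' - r')))))) ≤ 3/16 := by
    linarith only [mul_nonneg (sub_nonneg.2 ha2) hc0,
      mul_nonneg ha20 (by linarith only [he2] : (0:ℝ) ≤ 1/8 - (R' - r') * ((R' + (p * (R' - r') + r')) - (1 - q) * (R' - r'))), ha2, ha20]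
  have g1 : (0:ℝ) ≤ ((3/2) * (β * ((1 - p) * (((p * (R' - r') + r') - (q * (R' - r') + r')) * ((p * (R' - r') + r') + (q * (R' - r') + r')))))) * (1 - (19/16) * R') :=
    mul_nonneg hT0 (by linarith only [hR])
  have g2 : (0:ℝ) ≤ ((19/16) * R') * ((3/2) * (β * ((1 - p) * (p * ((R' - r') * ((R' + (p * (R' - r') + r')) - (1 - q) * (R' - r'))))))) :=
    mul_nonneg (by linarith only [hR0]) hC0
  have e1 : (0:ℝ) ≤ (1 - p) * ((R' - r') * (1 - (83/64) * ((3/2) * (β * (p * (R' + (p * (R' - r') + r'))))))) := by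
    apply mul_nonneg (by linarith only [hp1])
    apply mul_nonneg hD
    linarith only [mul_nonneg (sub_nonneg.2 hp1) hw0, hw]
  have e2 : (0:ℝ) ≤ ((19/64) - (19/16) * R') * ((3/2) * (β * ((1 - p) * (p * ((R' - r') * (R' + (p * (R' - r') + r'))))))) := by
    apply mul_nonneg (by linarith only [hR])
    have h := mul_nonneg (mul_nonneg hβp0 hp0) (mul_nonneg hD hS0)
    linarith only [h]
  have e3 : (0:ℝ) ≤ ((19/16) * R') * ((3/2) * (β * ((1 - p) * (p * ((R' - r') * ((1 - q) * (R' - r'))))))) := by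
    apply mul_nonneg (by linarith only [hR0])
    have h := mul_nonneg (mul_nonneg hβp0 hp0) (mul_nonneg hD (mul_nonneg (by linarith only [hq1] : (0:ℝ) ≤ 1 - q) hD))
    linarith only [h]
  have e4 : (0:ℝ) ≤ ((3/2) * (β * ((1 - p) * (((p * (R' - r') + r') - (q * (R' - r') + r')) * ((p * (R' - r') + r') + (q * (R' - r') + r')))))) * (1 + (19/16) * R') :=
    mul_nonneg hT0 (by linarith only [hR0])
  have f2 : (0:ℝ) ≤ ((p - q) * (R' - r')) * (1 - (19/16) * (R' * ((3/2) * (β * ((1 - p) * ((p * (R' - r') + r') + (q * (R' - r') + r'))))))) := by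
    apply mul_nonneg u2
    have hm0 : (0:ℝ) ≤ (p * (R' - r') + r') + (q * (R' - r') + r') := by linarith only [hy0, hx0]
    have ham : β * (1 - p) * ((p * (R' - r') + r') + (q * (R' - r') + r')) ≤ 1/2 := by
      linarith only [mul_nonneg hβp0 (by linarith only [hyR, hxy, hR] : (0:ℝ) ≤ 1/2 - ((p * (R' - r') + r') + (q * (R' - r') + r'))), hβp1, hβp0,
        mul_nonneg (sub_nonneg.2 hβp1) hm0]
    have ham0 : (0:ℝ) ≤ β * (1 - p) * ((p * (R' - r') + r') + (q * (R' - r') + r')) := mul_nonneg hβp0 hm0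
    linarith only [mul_nonneg (by linarith only [hR] : (0:ℝ) ≤ 1/4 - R') ham0,
      mul_nonneg hR0 (by linarith only [ham] : (0:ℝ) ≤ 1/2 - β * (1 - p) * ((p * (R' - r') + r') + (q * (R' - r') + r'))), hR]
  have k3 : (0:ℝ) ≤ (R' - r') * ((1 - q) - (q + (19/64) * p) * ((3/2) * (β * ((1 - p) * (R' + (p * (R' - r') + r')))))) := by
    apply mul_nonneg hD
    have h1 : (0:ℝ) ≤ (q + (19/64) * p) * (1 - p) * (1/2 - β * (R' + (p * (R' - r') + r'))) :=
      mul_nonneg (mul_nonneg (by linarith only [hq0, hp0]) (by linarith only [hp1])) (by linarith only [hw])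
    have h2 : (0:ℝ) ≤ (83/64 - (q + (19/64) * p)) * (1 - p) :=
      mul_nonneg (by linarith only [hq1, hp1]) (by linarith only [hp1])
    linarith only [h1, h2, hqp, hp1]
  have k4 : (0:ℝ) ≤ ((19/16) * R') * ((3/2) * (β * ((1 - p) * (((p * (R' - r') + r') - (q * (R' - r') + r')) * ((p * (R' - r') + r') + (q * (R' - r') + r')))))) :=
    mul_nonneg (by linarith only [hR0]) hT0
  have hA1R : (p * (R' - r') + r' + (3 / 2) * β * (p * R' ^ 2 + (1 - p) * (q * (R' - r') + r') ^ 2 - (p * (R' - r') + r') ^ 2)) ≤ R' := by linarith only [t1, hT0]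
  have hA2R : (q * (R' - r') + r' + (3 / 2) * β * (q * R' ^ 2 + (1 - q) * (p * (R' - r') + r') ^ 2 - (p * (R' - r') + r') ^ 2)) ≤ R' := by linarith only [u1, u2]
  have hA10 : (0:ℝ) ≤ (p * (R' - r') + r' + (3 / 2) * β * (p * R' ^ 2 + (1 - p) * (q * (R' - r') + r') ^ 2 - (p * (R' - r') + r') ^ 2)) := by linarith only [v1, v2, v3]
  have hA20 : (0:ℝ) ≤ (q * (R' - r') + r' + (3 / 2) * β * (q * R' ^ 2 + (1 - q) * (p * (R' - r') + r') ^ 2 - (p * (R' - r') + r') ^ 2)) := by linarith only [hx0, w1]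
  have hB1 : ((3 / 2) * β * ((1 - q) * (R' - r') ^ 2 * p * (1 - p) - p * R' ^ 2 - (1 - p) * (q * (R' - r') + r') ^ 2 + (p * (R' - r') + r') ^ 2)) ≤ 3/16 := by linarith only [hC0, hTle]
  have hB2 : -(3/16) ≤ ((3 / 2) * β * ((1 - q) * (R' - r') ^ 2 * p * (1 - p) - p * R' ^ 2 - (1 - p) * (q * (R' - r') + r') ^ 2 + (p * (R' - r') + r') ^ 2)) := by linarith only [hT0, hCle]
  have hI : (p * (R' - r') + r' + (3 / 2) * β * (p * R' ^ 2 + (1 - p) * (q * (R' - r') + r') ^ 2 - (p * (R' - r') + r') ^ 2)) + (19/16) * (R' * ((3 / 2) * β * ((1 - q) * (R' - r') ^ 2 * p * (1 - p) - p * R' ^ 2 - (1 - p) * (q * (R' - r') + r') ^ 2 + (p * (R' - r') + r') ^ 2))) ≤ R' := by linarith only [t1, g1, g2]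
  have hII : (p * (R' - r') + r' + (3 / 2) * β * (p * R' ^ 2 + (1 - p) * (q * (R' - r') + r') ^ 2 - (p * (R' - r') + r') ^ 2)) - (19/16) * (R' * ((3 / 2) * β * ((1 - q) * (R' - r') ^ 2 * p * (1 - p) - p * R' ^ 2 - (1 - p) * (q * (R' - r') + r') ^ 2 + (p * (R' - r') + r') ^ 2))) ≤ R' := by linarith only [e1, e2, e3, e4]
  have hIII : (q * (R' - r') + r' + (3 / 2) * β * (q * R' ^ 2 + (1 - q) * (p * (R' - r') + r') ^ 2 - (p * (R' - r') + r') ^ 2)) + (19/16) * (R' * ((3 / 2) * β * ((1 - q) * (R' - r') ^ 2 * p * (1 - p) - p * R' ^ 2 - (1 - p) * (q * (R' - r') + r') ^ 2 + (p * (R' - r') + r') ^ 2))) ≤ R' := by linarith only [u1, f2, g2]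
  have hIV : (q * (R' - r') + r' + (3 / 2) * β * (q * R' ^ 2 + (1 - q) * (p * (R' - r') + r') ^ 2 - (p * (R' - r') + r') ^ 2)) - (19/16) * (R' * ((3 / 2) * β * ((1 - q) * (R' - r') ^ 2 * p * (1 - p) - p * R' ^ 2 - (1 - p) * (q * (R' - r') + r') ^ 2 + (p * (R' - r') + r') ^ 2))) ≤ R' := by linarith only [e2, e3, k3, k4]
  have hBsq := mul_nonneg (by linarith only [hB1] : (0:ℝ) ≤ 3/16 - ((3 / 2) * β * ((1 - q) * (R' - r') ^ 2 * p * (1 - p) - p * R' ^ 2 - (1 - p) * (q * (R' - r') + r') ^ 2 + (p * (R' - r') + r') ^ 2)))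
    (by linarith only [hB2] : (0:ℝ) ≤ ((3 / 2) * β * ((1 - q) * (R' - r') ^ 2 * p * (1 - p) - p * R' ^ 2 - (1 - p) * (q * (R' - r') + r') ^ 2 + (p * (R' - r') + r') ^ 2)) + 3/16)
  have hden : (0:ℝ) < 1 - ((3 / 2) * β * ((1 - q) * (R' - r') ^ 2 * p * (1 - p) - p * R' ^ 2 - (1 - p) * (q * (R' - r') + r') ^ 2 + (p * (R' - r') + r') ^ 2)) ^ 2 := by linarith only [hBsq]
  refine ⟨?_, ?_, ?_⟩
  · rw [abs_lt]
    constructor <;> linarith only [hB1, hB2]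
  · rw [div_le_iff₀ hden]
    rcases le_or_gt 0 ((3 / 2) * β * ((1 - q) * (R' - r') ^ 2 * p * (1 - p) - p * R' ^ 2 - (1 - p) * (q * (R' - r') + r') ^ 2 + (p * (R' - r') + r') ^ 2)) with hb | hb
    · have m1 := mul_nonneg hb (sub_nonneg.2 hA2R)
      have m2 := mul_nonneg (mul_nonneg hR0 hb) (by linarith only [hB1] : (0:ℝ) ≤ 3/16 - ((3 / 2) * β * ((1 - q) * (R' - r') ^ 2 * p * (1 - p) - p * R' ^ 2 - (1 - p) * (q * (R' - r') + r') ^ 2 + (p * (R' - r') + r') ^ 2)))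
      linarith only [hI, m1, m2]
    · have m1 := mul_nonneg (by linarith only [hb] : (0:ℝ) ≤ -((3 / 2) * β * ((1 - q) * (R' - r') ^ 2 * p * (1 - p) - p * R' ^ 2 - (1 - p) * (q * (R' - r') + r') ^ 2 + (p * (R' - r') + r') ^ 2))) hA20
      have m2 := mul_nonneg (mul_nonneg hR0 (by linarith only [hb] : (0:ℝ) ≤ -((3 / 2) * β * ((1 - q) * (R' - r') ^ 2 * p * (1 - p) - p * R' ^ 2 - (1 - p) * (q * (R' - r') + r') ^ 2 + (p * (R' - r') + r') ^ 2))))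
        (by linarith only [hB2] : (0:ℝ) ≤ 3/16 + ((3 / 2) * β * ((1 - q) * (R' - r') ^ 2 * p * (1 - p) - p * R' ^ 2 - (1 - p) * (q * (R' - r') + r') ^ 2 + (p * (R' - r') + r') ^ 2)))
      have m3 := mul_nonneg hR0 (by linarith only [hb] : (0:ℝ) ≤ -((3 / 2) * β * ((1 - q) * (R' - r') ^ 2 * p * (1 - p) - p * R' ^ 2 - (1 - p) * (q * (R' - r') + r') ^ 2 + (p * (R' - r') + r') ^ 2)))
      linarith only [hII, m1, m2, m3]
  · rw [div_le_iff₀ hden]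
    rcases le_or_gt 0 ((3 / 2) * β * ((1 - q) * (R' - r') ^ 2 * p * (1 - p) - p * R' ^ 2 - (1 - p) * (q * (R' - r') + r') ^ 2 + (p * (R' - r') + r') ^ 2)) with hb | hb
    · have m1 := mul_nonneg hb (sub_nonneg.2 hA1R)
      have m2 := mul_nonneg (mul_nonneg hR0 hb) (by linarith only [hB1] : (0:ℝ) ≤ 3/16 - ((3 / 2) * β * ((1 - q) * (R' - r') ^ 2 * p * (1 - p) - p * R' ^ 2 - (1 - p) * (q * (R' - r') + r') ^ 2 + (p * (R' - r') + r') ^ 2)))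
      linarith only [hIII, m1, m2]
    · have m1 := mul_nonneg (by linarith only [hb] : (0:ℝ) ≤ -((3 / 2) * β * ((1 - q) * (R' - r') ^ 2 * p * (1 - p) - p * R' ^ 2 - (1 - p) * (q * (R' - r') + r') ^ 2 + (p * (R' - r') + r') ^ 2))) hA10
      have m2 := mul_nonneg (mul_nonneg hR0 (by linarith only [hb] : (0:ℝ) ≤ -((3 / 2) * β * ((1 - q) * (R' - r') ^ 2 * p * (1 - p) - p * R' ^ 2 - (1 - p) * (q * (R' - r') + r') ^ 2 + (p * (R' - r') + r') ^ 2))))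
        (by linarith only [hB2] : (0:ℝ) ≤ 3/16 + ((3 / 2) * β * ((1 - q) * (R' - r') ^ 2 * p * (1 - p) - p * R' ^ 2 - (1 - p) * (q * (R' - r') + r') ^ 2 + (p * (R' - r') + r') ^ 2)))
      have m3 := mul_nonneg hR0 (by linarith only [hb] : (0:ℝ) ≤ -((3 / 2) * β * ((1 - q) * (R' - r') ^ 2 * p * (1 - p) - p * R' ^ 2 - (1 - p) * (q * (R' - r') + r') ^ 2 + (p * (R' - r') + r') ^ 2)))
      linarith only [hIV, m1, m2, m3]

theorem stmt_12
    (R' r' p q β : ℝ)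
    (hr0 : 0 ≤ r') (hrR : r' ≤ R') (hR : R' ≤ 1 / 4)
    (hq0 : 0 ≤ q) (hqp : q ≤ p) (hp1 : p ≤ 1)
    (hβ0 : 0 ≤ β) (hβ1 : β ≤ 1) :
    let Δ := R' - r'
    let A₁ := p * Δ + r' + (3 / 2) * β *
      (p * R' ^ 2 + (1 - p) * (q * Δ + r') ^ 2 - (p * Δ + r') ^ 2)
    let A₂ := q * Δ + r' + (3 / 2) * β *
      (q * R' ^ 2 + (1 - q) * (p * Δ + r') ^ 2 - (p * Δ + r') ^ 2)
    let B := (3 / 2) * β *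
      ((1 - q) * Δ ^ 2 * p * (1 - p) - p * R' ^ 2 - (1 - p) * (q * Δ + r') ^ 2
        + (p * Δ + r') ^ 2)
    |B| < 1 ∧ (A₁ + B * A₂) / (1 - B ^ 2) ≤ R' ∧ (A₂ + B * A₁) / (1 - B ^ 2) ≤ R' := by
  intro Δ A₁ A₂ B
  exact aux_stmt12 R' r' p q β hr0 hrR hR hq0 hqp hp1 hβ0 hβ1
end

section
/- Let N ≥ 1, 0 < r < R with 2NR < 1, α ∈ (0,1], β ∈ (0,1], R̃ = αR, Δ = R̃ − αr, E(x) = xΔ + αr, V(x) = x(1−x)Δ². Then for all p ∈ [0,1]^N and all i, the equilibrium first-period effort s₁ⁱ(p) = E(pⁱ) + β[E(pⁱ)·Σⱼ(E(pⁱ)−E(pʲ)) + ((2N−1)/2)V(pⁱ)] satisfies 0 ≤ s₁ⁱ(p) ≤ R̃·(1 + (N−1)βΔ), and the aggregate first-period effort Σᵢ s₁ⁱ(p) is strictly less than 1. -/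
private lemma aux_lower (n d a b x T : ℝ)
    (hn : 1 ≤ n) (hd : 0 < d) (ha : 0 < a) (hb0 : 0 < b) (hb1 : b ≤ 1)
    (hx0 : 0 ≤ x) (hTN : T ≤ n) (hnd : 2 * n * d < 1) (hx1 : x ≤ 1) :
    0 ≤ (x * d + a) + b * ((x * d + a) * (n * x * d - d * T)
      + ((2 * n - 1) / 2) * (x * (1 - x) * d ^ 2)) := by
  have hE : 0 < x * d + a := by nlinarith
  have hnxd : 0 ≤ n * x * d :=
    mul_nonneg (mul_nonneg (by linarith) hx0) hd.le
  have hdT : d * T ≤ d * n := mul_le_mul_of_nonneg_left hTN hd.le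
  have hSlb : -(n * d) ≤ n * x * d - d * T := by linarith
  have hVc : 0 ≤ (2 * n - 1) / 2 * (x * (1 - x) * d ^ 2) :=
    mul_nonneg (by linarith) (mul_nonneg (mul_nonneg hx0 (by linarith)) (sq_nonneg d))
  have h1 : (x * d + a) * (-(n * d)) ≤ (x * d + a) * (n * x * d - d * T) :=
    mul_le_mul_of_nonneg_left hSlb hE.le
  have hbnd : b * (n * d) ≤ 1 / 2 := by
    have h0 : 0 ≤ (1 - b) * (n * d) :=
      mul_nonneg (by linarith) (mul_nonneg (by linarith) hd.le)
    nlinarith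
  have h2 : b * ((x * d + a) * (-(n * d)))
      ≤ b * ((x * d + a) * (n * x * d - d * T)
        + (2 * n - 1) / 2 * (x * (1 - x) * d ^ 2)) :=
    mul_le_mul_of_nonneg_left (by linarith) hb0.le
  have h4 : (b * (n * d)) * (x * d + a) ≤ (1 / 2) * (x * d + a) :=
    mul_le_mul_of_nonneg_right hbnd hE.le
  nlinarith

private lemma aux_upper (n d a b x T R' : ℝ)
    (hn : 1 ≤ n) (hd : 0 < d) (ha : 0 < a) (hb0 : 0 < b) (hb1 : b ≤ 1)
    (hx0 : 0 ≤ x) (hx1 : x ≤ 1) (hxT : x ≤ T) (hnd : 2 * n * d < 1)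
    (hR' : R' = d + a) :
    (x * d + a) + b * ((x * d + a) * (n * x * d - d * T)
      + ((2 * n - 1) / 2) * (x * (1 - x) * d ^ 2))
      ≤ R' * (1 + (n - 1) * b * d) := by
  have hE : 0 < x * d + a := by nlinarith
  have hdx : d * x ≤ d * T := mul_le_mul_of_nonneg_left hxT hd.le
  have hSub : n * x * d - d * T ≤ (n - 1) * x * d := by linarith
  have h1 : (x * d + a) * (n * x * d - d * T)
      ≤ (x * d + a) * ((n - 1) * x * d) :=
    mul_le_mul_of_nonneg_left hSub hE.le
  have h2 : b * ((x * d + a) * (n * x * d - d * T)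
        + (2 * n - 1) / 2 * (x * (1 - x) * d ^ 2))
      ≤ b * ((x * d + a) * ((n - 1) * x * d)
        + (2 * n - 1) / 2 * (x * (1 - x) * d ^ 2)) :=
    mul_le_mul_of_nonneg_left (by linarith) hb0.le
  obtain ⟨B, hB⟩ : ∃ B : ℝ, B = 1 + b * (n - 1) * ((1 + x) * d + a)
      - b * ((2 * n - 1) / 2) * x * d := ⟨_, rfl⟩
  have hid : R' * (1 + (n - 1) * b * d)
      - ((x * d + a) + b * ((x * d + a) * ((n - 1) * x * d)
        + (2 * n - 1) / 2 * (x * (1 - x) * d ^ 2)))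
      = (1 - x) * d * B := by
    rw [hB, hR']; ring
  have hbx1 : b * x ≤ 1 := by
    have : b * x ≤ b * 1 := mul_le_mul_of_nonneg_left hx1 hb0.le
    linarith
  have hbx0 : 0 ≤ b * x := mul_nonneg hb0.le hx0
  have hcd0 : 0 ≤ (2 * n - 1) / 2 * d := mul_nonneg (by linarith) hd.le
  have hcd : (2 * n - 1) / 2 * d ≤ 1 / 2 := by nlinarith
  have hterm : b * ((2 * n - 1) / 2) * x * d ≤ 1 := by
    have := mul_le_mul hbx1 hcd hcd0 (by norm_num : (0:ℝ) ≤ 1)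
    nlinarith
  have hpos : 0 ≤ b * (n - 1) * ((1 + x) * d + a) :=
    mul_nonneg (mul_nonneg hb0.le (by linarith)) (by nlinarith)
  have hBpos : 0 ≤ B := by rw [hB]; linarith
  have hfin : 0 ≤ (1 - x) * d * B :=
    mul_nonneg (mul_nonneg (by linarith) hd.le) hBpos
  linarith

private lemma aux_agg (n R' b d : ℝ)
    (hn : 1 ≤ n) (hd : 0 < d) (hb0 : 0 < b) (hb1 : b ≤ 1)
    (hR'0 : 0 < R') (hNR' : 2 * n * R' < 1) (hnd : 2 * n * d < 1) :
    n * (R' * (1 + (n - 1) * b * d)) < 1 := by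
  have hu0 : 0 ≤ (n - 1) * b * d :=
    mul_nonneg (mul_nonneg (by linarith) hb0.le) hd.le
  have hu : (n - 1) * b * d < 1 / 2 := by
    have h0 : 0 ≤ (n - 1) * (1 - b) * d :=
      mul_nonneg (mul_nonneg (by linarith) (by linarith)) hd.le
    nlinarith
  have hnR' : 0 < n * R' := mul_pos (by linarith) hR'0
  have h5 : (n * R') * (1 + (n - 1) * b * d) ≤ (n * R') * (3 / 2) :=
    mul_le_mul_of_nonneg_left (by linarith) hnR'.le
  nlinarith

theorem stmt_19
    (N : ℕ) (hN : 1 ≤ N)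
    (r R α β : ℝ)
    (hr : 0 < r) (hrR : r < R) (hbound : 2 * (N : ℝ) * R < 1)
    (hα : α ∈ Set.Ioc (0:ℝ) 1) (hβ : β ∈ Set.Ioc (0:ℝ) 1)
    (p : Fin N → ℝ) (hp : ∀ j, p j ∈ Set.Icc (0:ℝ) 1) :
    let R' := α * R
    let Δ := R' - α * r
    let E : ℝ → ℝ := fun x => x * Δ + α * r
    let V : ℝ → ℝ := fun x => x * (1 - x) * Δ ^ 2
    let s₁ : Fin N → ℝ := fun i =>
      E (p i) + β * (E (p i) * (∑ j, (E (p i) - E (p j)))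
        + ((2 * (N : ℝ) - 1) / 2) * V (p i))
    (∀ i, 0 ≤ s₁ i ∧ s₁ i ≤ R' * (1 + ((N : ℝ) - 1) * β * Δ)) ∧
    (∑ i, s₁ i) < 1 := by
  intro R' Δ E V s₁
  obtain ⟨hα0, hα1⟩ := hα
  obtain ⟨hβ0, hβ1⟩ := hβ
  have hN1 : (1:ℝ) ≤ (N:ℝ) := by exact_mod_cast hN
  have hR0 : 0 < R := lt_trans hr hrR
  have hΔ : 0 < Δ := by
    have : 0 < α * (R - r) := mul_pos hα0 (by linarith)
    simp only [Δ, R']; nlinarith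
  have ha : 0 < α * r := mul_pos hα0 hr
  have hΔR : Δ ≤ R := by
    have h1 : α * (R - r) ≤ 1 * (R - r) :=
      mul_le_mul_of_nonneg_right hα1 (by linarith)
    simp only [Δ, R']; nlinarith
  have hNΔ : 2 * (N:ℝ) * Δ < 1 := by
    have : 2 * (N:ℝ) * Δ ≤ 2 * (N:ℝ) * R := by nlinarith
    linarith
  have hR'0 : 0 < R' := mul_pos hα0 hR0
  have hR'E : R' = Δ + α * r := by simp only [Δ]; ring
  have hR'R : R' ≤ R := by
    have := mul_le_mul_of_nonneg_right hα1 hR0.le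
    simpa [R'] using this
  have hNR' : 2 * (N:ℝ) * R' < 1 := by
    have : 2 * (N:ℝ) * R' ≤ 2 * (N:ℝ) * R := by nlinarith
    linarith
  have key : ∀ i, 0 ≤ s₁ i ∧ s₁ i ≤ R' * (1 + ((N : ℝ) - 1) * β * Δ) := by
    intro i
    obtain ⟨hx0, hx1⟩ := hp i
    have hTN : (∑ j, p j) ≤ (N:ℝ) := by
      have := Finset.sum_le_card_nsmul Finset.univ p 1 (fun j _ => (hp j).2)
      simpa using this
    have hxT : p i ≤ (∑ j, p j) :=
      Finset.single_le_sum (f := p) (fun j _ => (hp j).1) (Finset.mem_univ i)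
    have hS : (∑ j, (E (p i) - E (p j))) = (N:ℝ) * (p i) * Δ - Δ * (∑ j, p j) := by
      simp only [E, Finset.sum_sub_distrib, Finset.sum_const, Finset.card_univ,
        Fintype.card_fin, nsmul_eq_mul, Finset.sum_add_distrib, ← Finset.sum_mul]
      ring
    constructor
    · show 0 ≤ E (p i) + β * (E (p i) * (∑ j, (E (p i) - E (p j)))
        + ((2 * (N : ℝ) - 1) / 2) * V (p i))
      rw [hS]
      exact aux_lower (N:ℝ) Δ (α * r) β (p i) (∑ j, p j)
        hN1 hΔ ha hβ0 hβ1 hx0 hTN hNΔ hx1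
    · show E (p i) + β * (E (p i) * (∑ j, (E (p i) - E (p j)))
        + ((2 * (N : ℝ) - 1) / 2) * V (p i)) ≤ R' * (1 + ((N : ℝ) - 1) * β * Δ)
      rw [hS]
      exact aux_upper (N:ℝ) Δ (α * r) β (p i) (∑ j, p j) R'
        hN1 hΔ ha hβ0 hβ1 hx0 hx1 hxT hNΔ hR'E
  refine ⟨key, ?_⟩
  have hsum : (∑ i, s₁ i) ≤ ∑ _i : Fin N, R' * (1 + ((N : ℝ) - 1) * β * Δ) :=
    Finset.sum_le_sum (fun i _ => (key i).2)
  have heq : (∑ _i : Fin N, R' * (1 + ((N : ℝ) - 1) * β * Δ))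
      = (N:ℝ) * (R' * (1 + ((N : ℝ) - 1) * β * Δ)) := by
    rw [Finset.sum_const, Finset.card_univ, Fintype.card_fin, nsmul_eq_mul]
  have hlt : (N:ℝ) * (R' * (1 + ((N : ℝ) - 1) * β * Δ)) < 1 :=
    aux_agg (N:ℝ) R' β Δ hN1 hΔ hβ0 hβ1 hR'0 hNR' hNΔ
  calc (∑ i, s₁ i) ≤ _ := hsum
    _ = _ := heq
    _ < 1 := hlt
end
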